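/- Every non-trivial acyclic b-matching preference instance (one in which the acceptance graph has at least one edge, i.e., not all preference lists are empty) contains at least one loving pair. -/
import Mathlib


/-!
A formalization of b-matching preference instances (peers, acceptance graph,
quotas, preference lists given by ranks), configurations, blocking pairs,
stability, active initiatives, loving pairs, and acyclicity.
-/

open Finset

/-- A b-matching preference instance on a finite set `P` of peers:
an acceptance graph `G`, quotas `b`, and for each peer `p` a rank function
(`rank p q` is the position of `q` in `p`'s preference list, smaller is better),
injective on the neighbors of `p` (strict preferences). -/
structure PrefInstance (P : Type*) [Fintype P] [DecidableEq P] where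
  G : SimpleGraph P
  b : P → ℕ
  rank : P → P → ℕ
  rank_injOn : ∀ p : P, Set.InjOn (rank p) {q | G.Adj p q}

namespace PrefInstance

variable {P : Type*} [Fintype P] [DecidableEq P] (I : PrefInstance P)

/-- `p` prefers `q` to `r` (both neighbors of `p`, `q` ranked better). -/
def Prefers (p q r : P) : Prop :=
  I.G.Adj p q ∧ I.G.Adj p r ∧ I.rank p q < I.rank p r

/-- The instance is acyclic: there is no preference cycle, i.e. no `k ≥ 3`
distinct peers `p_1, …, p_k` (indices modulo `k`) such that each `p_i`
prefers `p_{i+1}` to `p_{i-1}`. -/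
def Acyclic : Prop :=
  ¬ ∃ (k : ℕ) (f : ZMod k → P), 3 ≤ k ∧ Function.Injective f ∧
      ∀ i : ZMod k, I.Prefers (f i) (f (i + 1)) (f (i - 1))

/-- The mates of `p` in a set `C` of edges. -/
def mates (C : Finset (Sym2 P)) (p : P) : Finset P :=
  Finset.univ.filter fun q => s(p, q) ∈ C

/-- `C` is a configuration: a set of edges of the acceptance graph in which every
peer `p` has at most `b p` mates. -/
def IsConfig (C : Finset (Sym2 P)) : Prop :=
  (∀ e ∈ C, e ∈ I.G.edgeSet) ∧ ∀ p : P, (mates C p).card ≤ I.b p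

/-- `p` is under-mated in `C`: it has fewer than `b p` mates. -/
def UnderMated (C : Finset (Sym2 P)) (p : P) : Prop :=
  (mates C p).card < I.b p

/-- `p` is willing to pair with `q`: it is under-mated, or it prefers `q`
to its worst mate in `C`. -/
def Willing (C : Finset (Sym2 P)) (p q : P) : Prop :=
  I.UnderMated C p ∨ ∃ w ∈ mates C p, I.rank p q < I.rank p w

/-- `{p, q}` is a blocking pair for `C`: an edge of the acceptance graph not in
`C` such that each endpoint is under-mated or prefers the other to its worst mate. -/
def BlockingPair (C : Finset (Sym2 P)) (p q : P) : Prop :=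
  I.G.Adj p q ∧ s(p, q) ∉ C ∧ I.Willing C p q ∧ I.Willing C q p

/-- A configuration is stable if it admits no blocking pair. -/
def IsStable (C : Finset (Sym2 P)) : Prop :=
  I.IsConfig C ∧ ∀ p q : P, ¬ I.BlockingPair C p q

/-- The edges to be dropped at `p` when `p` gets a new mate: none if `p` is
under-mated, otherwise the edge joining `p` to its worst mate in `C`. -/
def dropEdges (C : Finset (Sym2 P)) (p : P) : Finset (Sym2 P) :=
  if (mates C p).card < I.b p then ∅
  else ((mates C p).filter fun w => ∀ r ∈ mates C p, I.rank p r ≤ I.rank p w).image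
      fun w => s(p, w)

/-- The configuration produced by resolving the blocking pair `{p, q}` of `C`:
add the edge `{p, q}` and, for each of `p` and `q` already at full quota,
remove the edge joining it to its worst mate. -/
def resolve (C : Finset (Sym2 P)) (p q : P) : Finset (Sym2 P) :=
  insert s(p, q) (C \ (I.dropEdges C p ∪ I.dropEdges C q))

/-- `C'` is obtained from `C` by an active initiative. -/
def ActiveStep (C C' : Finset (Sym2 P)) : Prop :=
  ∃ p q : P, I.BlockingPair C p q ∧ C' = I.resolve C p q

/-- `{p, q}` is a loving pair: an edge of the acceptance graph whose endpoints
rank each other first. -/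
def LovingPair (p q : P) : Prop :=
  I.G.Adj p q ∧ (∀ r : P, I.G.Adj p r → I.rank p q ≤ I.rank p r) ∧
    ∀ r : P, I.G.Adj q r → I.rank q p ≤ I.rank q r

open scoped Classical in
/-- The best-mate initiative of peer `p` at configuration `C`: resolve the
blocking pair `{p, q}` where `q` is the peer `p` prefers most among all peers
forming a blocking pair with `p`; if `p` belongs to no blocking pair, `C` is
left unchanged. -/
noncomputable def bestMateInit (C : Finset (Sym2 P)) (p : P) : Finset (Sym2 P) :=
  if h : ∃ q : P, I.BlockingPair C p q ∧
      ∀ r : P, I.BlockingPair C p r → I.rank p q ≤ I.rank p r then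
    I.resolve C p h.choose
  else C

end PrefInstance

variable {P : Type*} [Fintype P] [DecidableEq P]

open PrefInstance


section Aux

variable {P : Type*} [Fintype P] [DecidableEq P]

lemma exists_best (I : PrefInstance P) {p q : P} (h : I.G.Adj p q) :
    ∃ b, I.G.Adj p b ∧ ∀ r, I.G.Adj p r → I.rank p b ≤ I.rank p r := by
  classical
  obtain ⟨b, hb, hmin⟩ := Finset.exists_min_image
    (Finset.univ.filter fun r => I.G.Adj p r) (I.rank p) ⟨q, by simp [h]⟩
  exact ⟨b, by simpa using hb, fun r hr => hmin r (by simp [hr])⟩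

open scoped Classical in
/-- The top-ranked neighbor of `p` (or `p` itself if `p` is isolated). -/
noncomputable def best (I : PrefInstance P) (p : P) : P :=
  if h : ∃ b, I.G.Adj p b ∧ ∀ r, I.G.Adj p r → I.rank p b ≤ I.rank p r
    then h.choose else p

lemma best_spec (I : PrefInstance P) {p q : P} (h : I.G.Adj p q) :
    I.G.Adj p (best I p) ∧ ∀ r, I.G.Adj p r → I.rank p (best I p) ≤ I.rank p r := by
  have hex := exists_best I h
  rw [best, dif_pos hex]
  exact hex.choose_spec

end Aux

/-- Every non-trivial acyclic b-matching preference instance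
(one whose acceptance graph has at least one edge) contains a loving pair. -/
theorem acyclic_exists_lovingPair (I : PrefInstance P) (hI : I.Acyclic)
    (hnontrivial : ∃ p q : P, I.G.Adj p q) :
    ∃ p q : P, I.LovingPair p q := by
  classical
  obtain ⟨p0, q0, hpq0⟩ := hnontrivial
  set f := best I with hf
  -- every iterate of f starting from p0 has a neighbor
  have hnb : ∀ n : ℕ, ∃ q, I.G.Adj (f^[n] p0) q := by
    intro n
    induction n with
    | zero => exact ⟨q0, hpq0⟩
    | succ n ih =>
      obtain ⟨q, hq⟩ := ih
      rw [Function.iterate_succ_apply']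
      exact ⟨f^[n] p0, ((best_spec I hq).1).symm⟩
  -- find a periodic point
  obtain ⟨m, n, hmn, heq⟩ : ∃ m n : ℕ, m < n ∧ f^[m] p0 = f^[n] p0 := by
    obtain ⟨m, n, hne, heq⟩ := Finite.exists_ne_map_eq_of_infinite (fun n : ℕ => f^[n] p0)
    rcases hne.lt_or_gt with h | h
    · exact ⟨m, n, h, heq⟩
    · exact ⟨n, m, h, heq.symm⟩
  set a := f^[m] p0 with ha
  have hpp : Function.IsPeriodicPt f (n - m) a := by
    show f^[n - m] a = a
    rw [ha, ← Function.iterate_add_apply, Nat.sub_add_cancel hmn.le, ← ha]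
    exact heq.symm
  have hmem : a ∈ Function.periodicPts f :=
    Function.mk_mem_periodicPts (by omega) hpp
  set k := Function.minimalPeriod f a with hk
  have hkpos : 0 < k := Function.minimalPeriod_pos_of_mem_periodicPts hmem
  have hper : Function.IsPeriodicPt f k a := Function.isPeriodicPt_minimalPeriod f a
  have hanb : ∀ j : ℕ, ∃ q, I.G.Adj (f^[j] a) q := by
    intro j; rw [ha, ← Function.iterate_add_apply]; exact hnb _
  have hbest : ∀ j : ℕ, I.G.Adj (f^[j] a) (f^[j+1] a) ∧
      ∀ r, I.G.Adj (f^[j] a) r → I.rank (f^[j] a) (f^[j+1] a) ≤ I.rank (f^[j] a) r := by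
    intro j
    obtain ⟨q, hq⟩ := hanb j
    rw [Function.iterate_succ_apply']
    exact best_spec I hq
  -- case analysis on k
  rcases lt_or_ge k 3 with hk3 | hk3
  · interval_cases k
    · -- k = 1 : f a = a, contradicting irreflexivity
      have h1 : f a = a := hper
      have h := (hbest 0).1
      have : I.G.Adj a a := by
        have e : f^[0+1] a = a := by
          rw [Function.iterate_succ_apply', Function.iterate_zero, id_eq]; exact h1
        rwa [e] at h
      exact absurd this (I.G.irrefl)
    · -- k = 2 : loving pair
      have h2 : f (f a) = a := hper
      obtain ⟨hadj0, hmin0⟩ := hbest 0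
      obtain ⟨hadj1', hmin1⟩ := hbest 1
      have e4 : f^[1+1] a = a := by
        rw [Function.iterate_succ_apply', Function.iterate_one]; exact h2
      rw [e4] at hmin1
      exact ⟨a, f a, hadj0, hmin0, hmin1⟩
  · -- k ≥ 3 : build a preference cycle, contradicting acyclicity
    exfalso
    haveI : NeZero k := ⟨by omega⟩
    set F : ZMod k → P := fun i => f^[i.val] a with hF
    have hFm : ∀ j : ℕ, F (j : ZMod k) = f^[j] a := by
      intro j
      show f^[(j : ZMod k).val] a = f^[j] a
      rw [ZMod.val_natCast]
      exact hper.iterate_mod_apply j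
    have hFinj : Function.Injective F := by
      intro i j hij
      have := Function.iterate_injOn_Iio_minimalPeriod
        (f := f) (x := a) (Set.mem_Iio.2 (ZMod.val_lt i)) (Set.mem_Iio.2 (ZMod.val_lt j)) hij
      exact ZMod.val_injective k this
    have hstep : ∀ i : ZMod k, F (i + 1) = f (F i) := by
      intro i
      conv_lhs => rw [← ZMod.natCast_zmod_val i]
      have : ((i.val : ZMod k) + 1) = ((i.val + 1 : ℕ) : ZMod k) := by push_cast; ring
      rw [this, hFm, Function.iterate_succ_apply']
    apply hI
    refine ⟨k, F, hk3, hFinj, fun i => ?_⟩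
    have hadj1 : I.G.Adj (F i) (F (i + 1)) := by
      rw [hstep]
      obtain ⟨q, hq⟩ := hanb i.val
      exact (best_spec I hq).1
    have hadj2 : I.G.Adj (F i) (F (i - 1)) := by
      have : f (F (i - 1)) = F i := by rw [← hstep]; ring_nf
      obtain ⟨q, hq⟩ := hanb (i - 1).val
      have h := (best_spec I hq).1
      rw [show best I (f^[(i-1).val] a) = f (F (i-1)) from rfl, this] at h
      exact h.symm
    have hmin : I.rank (F i) (F (i + 1)) ≤ I.rank (F i) (F (i - 1)) := by
      rw [hstep]
      obtain ⟨q, hq⟩ := hanb i.val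
      exact (best_spec I hq).2 _ hadj2
    have hne : F (i + 1) ≠ F (i - 1) := by
      intro h
      have h2 : i + 1 = i - 1 := hFinj h
      have : ((2 : ℕ) : ZMod k) = ((0 : ℕ) : ZMod k) := by
        push_cast
        linear_combination h2
      rw [ZMod.natCast_eq_natCast_iff] at this
      have hdvd := (Nat.modEq_zero_iff_dvd).1 this
      exact absurd (Nat.le_of_dvd (by norm_num) hdvd) (by omega)
    have hlt : I.rank (F i) (F (i + 1)) < I.rank (F i) (F (i - 1)) := by
      rcases hmin.lt_or_eq with h | h
      · exact h
      · exact absurd (I.rank_injOn (F i) hadj1 hadj2 h) hne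
    exact ⟨hadj1, hadj2, hlt⟩
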